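/- arXiv:1209.0264 — 2 statements merged into one kernel-verified Lean document; each statement's English description precedes it below -/
import Mathlib

section
/- Let n ≥ 1 and let s be an integer with 0 ≤ s ≤ n. Let λ₁ ≤ λ₂ ≤ ⋯ ≤ λₙ be real numbers in the interval [0, 1] with λ₁ + ⋯ + λₙ = s, let G be their Newton polygon, and assume: (i) G(i) is an integer at every breakpoint i; (ii) at most one index i has λᵢ = 0; (iii) at most one index i has λᵢ = 1. Then there exists d ∈ {0, 1}ⁿ with d₁ + ⋯ + dₙ = s such that for every 1 ≤ i ≤ n − 1 the partial sum P(i) = d₁ + ⋯ + dᵢ satisfies P(i) ≤ G(i), with equality if and only if i is a breakpoint of (λ₁,…,λₙ). (In other words, there exists a lattice path from (0,0) to (n,s) with steps (1,0) and (1,1) lying weakly below the Newton polygon and touching it precisely at the initial point, the end point, and the breakpoints.) -/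
/-!
Take as lattice path the height `P i`: the largest integer `≤ G i` when `i` is `0`, `n` or a
breakpoint, and the largest integer `< G i` otherwise. At `0`, `n` and the breakpoints `G i` is an
integer, so `P` touches `G` exactly there. As every slope `λᵢ` lies in `[0, 1]`, consecutive
heights differ by `0` or `1` provided `λᵢ₊₁ > 0` whenever `i + 1` is not a breakpoint and
`λᵢ₊₁ < 1` whenever `i` is not one. A non-breakpoint sits between two equal slopes, so this is
exactly what (ii) and (iii) provide.
-/

open Finset

/-- The greatest integer `≤ g i` for `i ∈ B`, and the greatest integer `< g i` otherwise. -/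
noncomputable def heightBelow (g : ℕ → ℝ) (B : Set ℕ) (i : ℕ) : ℤ :=
  open Classical in if i ∈ B then ⌊g i⌋ else ⌈g i⌉ - 1

section heightBelow

variable {g : ℕ → ℝ} {B : Set ℕ} {i : ℕ}

lemma heightBelow_of_mem (h : i ∈ B) : heightBelow g B i = ⌊g i⌋ := by
  simp [heightBelow, h]

lemma heightBelow_of_notMem (h : i ∉ B) : heightBelow g B i = ⌈g i⌉ - 1 := by
  simp [heightBelow, h]

lemma heightBelow_lt_of_notMem (h : i ∉ B) : (heightBelow g B i : ℝ) < g i := by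
  rw [heightBelow_of_notMem h]
  push_cast
  linarith [Int.ceil_lt_add_one (g i)]

lemma heightBelow_le : (heightBelow g B i : ℝ) ≤ g i := by
  by_cases h : i ∈ B
  · rw [heightBelow_of_mem h]
    exact Int.floor_le (g i)
  · exact (heightBelow_lt_of_notMem h).le

lemma heightBelow_eq_iff (hint : i ∈ B → ∃ m : ℤ, g i = m) :
    (heightBelow g B i : ℝ) = g i ↔ i ∈ B := by
  refine ⟨fun h => by_contra fun hi => (heightBelow_lt_of_notMem hi).ne h, fun hi => ?_⟩
  obtain ⟨m, hm⟩ := hint hi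
  rw [heightBelow_of_mem hi, hm, Int.floor_intCast]

lemma heightBelow_succ_sub_eq_zero_or_one {j : ℕ} (hle : g j ≤ g (j + 1))
    (hle' : g (j + 1) ≤ g j + 1) (hlt : j + 1 ∉ B → g j < g (j + 1))
    (hlt' : j ∉ B → g (j + 1) < g j + 1) :
    heightBelow g B (j + 1) - heightBelow g B j = 0 ∨
      heightBelow g B (j + 1) - heightBelow g B j = 1 := by
  have hbounds : (-1 : ℝ) < heightBelow g B (j + 1) - heightBelow g B j ∧
      (heightBelow g B (j + 1) - heightBelow g B j : ℝ) < 2 := by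
    have := Int.floor_le (g j); have := Int.lt_floor_add_one (g j)
    have := Int.floor_le (g (j + 1)); have := Int.lt_floor_add_one (g (j + 1))
    have := Int.le_ceil (g j); have := Int.ceil_lt_add_one (g j)
    have := Int.le_ceil (g (j + 1)); have := Int.ceil_lt_add_one (g (j + 1))
    by_cases hj : j ∈ B <;> by_cases hj' : j + 1 ∈ B
    · rw [heightBelow_of_mem hj, heightBelow_of_mem hj']
      constructor <;> linarith
    · rw [heightBelow_of_mem hj, heightBelow_of_notMem hj']
      have := hlt hj'
      push_cast; constructor <;> linarith
    · rw [heightBelow_of_notMem hj, heightBelow_of_mem hj']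
      have := hlt' hj
      push_cast; constructor <;> linarith
    · rw [heightBelow_of_notMem hj, heightBelow_of_notMem hj']
      push_cast; constructor <;> linarith
  have hlo : (-1 : ℤ) < heightBelow g B (j + 1) - heightBelow g B j := by exact_mod_cast hbounds.1
  have hhi : heightBelow g B (j + 1) - heightBelow g B j < 2 := by exact_mod_cast hbounds.2
  omega

end heightBelow

lemma sum_Icc_sub_pred (f : ℕ → ℤ) (k : ℕ) : ∑ i ∈ Icc 1 k, (f i - f (i - 1)) = f k - f 0 := by
  induction k with
  | zero => simp
  | succ k ih => rw [sum_Icc_succ_top (by omega), ih, Nat.add_sub_cancel]; ring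

def newtonPolygon (lam : ℕ → ℝ) (i : ℕ) : ℝ := ∑ t ∈ Icc 1 i, lam t

def contactSet (n : ℕ) (lam : ℕ → ℝ) : Set ℕ := {i | i = 0 ∨ i = n ∨ lam i ≠ lam (i + 1)}

lemma newtonPolygon_succ (lam : ℕ → ℝ) (j : ℕ) :
    newtonPolygon lam (j + 1) = newtonPolygon lam j + lam (j + 1) :=
  sum_Icc_succ_top (by omega) lam

lemma heightBelow_newtonPolygon_succ_sub_eq_zero_or_one {n : ℕ} {lam : ℕ → ℝ}
    (h01 : ∀ i, 1 ≤ i → i ≤ n → 0 ≤ lam i ∧ lam i ≤ 1)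
    (h0 : ∀ i j, 1 ≤ i → i ≤ n → 1 ≤ j → j ≤ n → lam i = 0 → lam j = 0 → i = j)
    (h1 : ∀ i j, 1 ≤ i → i ≤ n → 1 ≤ j → j ≤ n → lam i = 1 → lam j = 1 → i = j)
    {j : ℕ} (hj : j < n) :
    let P := heightBelow (newtonPolygon lam) (contactSet n lam)
    P (j + 1) - P j = 0 ∨ P (j + 1) - P j = 1 := by
  obtain ⟨hlam0, hlam1⟩ := h01 (j + 1) (by omega) hj
  refine heightBelow_succ_sub_eq_zero_or_one ?_ ?_ (fun hj' => ?_) (fun hj' => ?_)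
  · rw [newtonPolygon_succ]; linarith
  · rw [newtonPolygon_succ]; linarith
  · simp only [contactSet, Set.mem_ofPred_eq, not_or, not_not] at hj'
    have hpos : lam (j + 1) ≠ 0 := fun h =>
      absurd (h0 (j + 1) (j + 2) (by omega) hj (by omega) (by omega) h (hj'.2.2 ▸ h)) (by omega)
    rw [newtonPolygon_succ]
    linarith [lt_of_le_of_ne hlam0 (Ne.symm hpos)]
  · simp only [contactSet, Set.mem_ofPred_eq, not_or, not_not] at hj'
    have hlt : lam (j + 1) ≠ 1 := fun h =>
      absurd (h1 j (j + 1) (by omega) (by omega) (by omega) hj (hj'.2.2 ▸ h) h) (by omega)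
    rw [newtonPolygon_succ]
    linarith [lt_of_le_of_ne hlam1 hlt]

theorem stmt6_general (n s : ℕ) (lam : ℕ → ℝ)
    (h01 : ∀ i, 1 ≤ i → i ≤ n → 0 ≤ lam i ∧ lam i ≤ 1)
    (hsum : ∑ i ∈ Finset.Icc 1 n, lam i = (s : ℝ))
    (hint : ∀ i, 1 ≤ i → i ≤ n - 1 → lam i ≠ lam (i + 1) →
      ∃ m : ℤ, (∑ t ∈ Finset.Icc 1 i, lam t) = (m : ℝ))
    (h0 : ∀ i j, 1 ≤ i → i ≤ n → 1 ≤ j → j ≤ n → lam i = 0 → lam j = 0 → i = j)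
    (h1 : ∀ i j, 1 ≤ i → i ≤ n → 1 ≤ j → j ≤ n → lam i = 1 → lam j = 1 → i = j) :
    ∃ d : ℕ → ℤ,
      (∀ i, 1 ≤ i → i ≤ n → d i = 0 ∨ d i = 1) ∧
      (∑ i ∈ Finset.Icc 1 n, d i = (s : ℤ)) ∧
      ∀ i, 1 ≤ i → i ≤ n - 1 →
        ((∑ t ∈ Finset.Icc 1 i, (d t : ℝ)) ≤ (∑ t ∈ Finset.Icc 1 i, lam t) ∧
         ((∑ t ∈ Finset.Icc 1 i, (d t : ℝ)) = (∑ t ∈ Finset.Icc 1 i, lam t) ↔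
           lam i ≠ lam (i + 1))) := by
  set P : ℕ → ℤ := heightBelow (newtonPolygon lam) (contactSet n lam)
  have hP0 : P 0 = 0 := by
    simp [P, heightBelow_of_mem (show 0 ∈ contactSet n lam from Or.inl rfl), newtonPolygon]
  have hPn : P n = s := by
    simp only [P, heightBelow_of_mem (show n ∈ contactSet n lam from Or.inr (Or.inl rfl))]
    simpa [newtonPolygon] using congrArg Int.floor hsum
  have hP_sum (k : ℕ) : ∑ t ∈ Icc 1 k, (P t - P (t - 1)) = P k := by
    rw [sum_Icc_sub_pred, hP0, sub_zero]
  refine ⟨fun t => P t - P (t - 1), fun i hi hin => ?_, by rw [hP_sum, hPn], fun i hi hin => ?_⟩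
  · obtain ⟨j, rfl⟩ := Nat.exists_eq_add_of_le' hi
    exact heightBelow_newtonPolygon_succ_sub_eq_zero_or_one h01 h0 h1 (by omega)
  · have hiB : i ∈ contactSet n lam ↔ lam i ≠ lam (i + 1) := by
      simp only [contactSet, Set.mem_ofPred_eq, or_iff_right (by omega : i ≠ 0),
        or_iff_right (by omega : i ≠ n)]
    rw [← Int.cast_sum, hP_sum]
    exact ⟨heightBelow_le,
      (heightBelow_eq_iff fun hiB' => hint i hi hin (hiB.mp hiB')).trans hiB⟩

/-- Let `n ≥ 1`, `0 ≤ s ≤ n`.  Let `λ₁ ≤ ⋯ ≤ λₙ` be reals in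
`[0,1]` with `λ₁ + ⋯ + λₙ = s`, with Newton polygon `G(i) = λ₁ + ⋯ + λᵢ`, and
assume: (i) `G(i)` is an integer at every breakpoint `i` (an index
`1 ≤ i ≤ n−1` with `λᵢ ≠ λᵢ₊₁`); (ii) at most one index has `λᵢ = 0`;
(iii) at most one index has `λᵢ = 1`.  Then there exists `d ∈ {0,1}ⁿ` with
`d₁ + ⋯ + dₙ = s` such that for every `1 ≤ i ≤ n−1` the partial sum
`P(i) = d₁ + ⋯ + dᵢ` satisfies `P(i) ≤ G(i)`, with equality iff `i` is a
breakpoint of `(λ₁,…,λₙ)`. -/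
theorem stmt6 (n s : ℕ) (hn : 1 ≤ n) (hs : s ≤ n) (lam : ℕ → ℝ)
    (hmono : ∀ i, 1 ≤ i → i < n → lam i ≤ lam (i + 1))
    (h01 : ∀ i, 1 ≤ i → i ≤ n → 0 ≤ lam i ∧ lam i ≤ 1)
    (hsum : ∑ i ∈ Finset.Icc 1 n, lam i = (s : ℝ))
    (hint : ∀ i, 1 ≤ i → i ≤ n - 1 → lam i ≠ lam (i + 1) →
      ∃ m : ℤ, (∑ t ∈ Finset.Icc 1 i, lam t) = (m : ℝ))
    (h0 : ∀ i j, 1 ≤ i → i ≤ n → 1 ≤ j → j ≤ n → lam i = 0 → lam j = 0 → i = j)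
    (h1 : ∀ i j, 1 ≤ i → i ≤ n → 1 ≤ j → j ≤ n → lam i = 1 → lam j = 1 → i = j) :
    ∃ d : ℕ → ℤ,
      (∀ i, 1 ≤ i → i ≤ n → d i = 0 ∨ d i = 1) ∧
      (∑ i ∈ Finset.Icc 1 n, d i = (s : ℤ)) ∧
      ∀ i, 1 ≤ i → i ≤ n - 1 →
        ((∑ t ∈ Finset.Icc 1 i, (d t : ℝ)) ≤ (∑ t ∈ Finset.Icc 1 i, lam t) ∧
         ((∑ t ∈ Finset.Icc 1 i, (d t : ℝ)) = (∑ t ∈ Finset.Icc 1 i, lam t) ↔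
           lam i ≠ lam (i + 1))) :=
  stmt6_general n s lam h01 hsum hint h0 h1
end

section
/- Let n ≥ 1 and m := ⌊n/2⌋. Let φ : ℤⁿ → ℤ^m be the group homomorphism defined by φ(e)ⱼ = eⱼ − e_{n+1−j} for 1 ≤ j ≤ m, and let Ψ : ℂ[ℤⁿ] → ℂ[ℤ^m] be the induced ℂ-algebra homomorphism of group algebras (sending the basis element corresponding to e ∈ ℤⁿ to the basis element corresponding to φ(e)). Then for every element f ∈ ℂ[ℤⁿ] that is invariant under the action of the symmetric group Sₙ permuting the coordinates of ℤⁿ, the image Ψ(f) is invariant under the hyperoctahedral group S_m ⋉ (ℤ/2ℤ)^m acting on ℂ[ℤ^m], where S_m permutes the coordinates of ℤ^m and each generator of (ℤ/2ℤ)^m negates one coordinate of ℤ^m. -/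
/-!
Split `Fin n` into the pairs `{j, n - 1 - j}` (`j < m`) and, for odd `n`, the middle index.
A signed permutation `(τ, ε)` of `Fin m` lifts to the permutation `σ` of `Fin n` that moves the
pair of `j` onto the pair of `τ j`, swapping its two members exactly when `ε j`. Since `φ(e)ⱼ` is
the difference of the two entries of `e` on the pair of `j`, `φ(e ∘ σ)` is the signed permutation
of `φ(e)`; so `Ψ` intertwines the two actions and carries `Sₙ`-invariants to invariants.
-/

/-- The group homomorphism `φ : ℤⁿ → ℤ^m`, `m = ⌊n/2⌋`, defined (in 1-based
indexing) by `φ(e)ⱼ = eⱼ − e_{n+1−j}` for `1 ≤ j ≤ m`; below indices are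
0-based, so `φ(e) j = e j − e (n − 1 − j)`. -/
def phiMap (n : ℕ) : (Fin n → ℤ) →+ (Fin (n / 2) → ℤ) where
  toFun e := fun j =>
    e ⟨(j : ℕ), by have := j.isLt; omega⟩ -
      e ⟨n - 1 - (j : ℕ), by have := j.isLt; omega⟩
  map_zero' := by
    funext j
    simp
  map_add' a b := by
    funext j
    simp only [Pi.add_apply]
    ring

theorem Finsupp.mapDomain_mapDomain_eq_of_semiconj {α β M : Type*} [AddCommMonoid M]
    {φ : α → β} {g : α → α} {h : β → β} (hφ : Function.Semiconj φ g h) {f : α →₀ M}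
    (hf : Finsupp.mapDomain g f = f) :
    Finsupp.mapDomain h (Finsupp.mapDomain φ f) = Finsupp.mapDomain φ f := by
  rw [← Finsupp.mapDomain_comp, ← hφ.comp_eq, Finsupp.mapDomain_comp, hf]

namespace phiMap

variable {n : ℕ}

def pairIndex (n : ℕ) : Fin (n / 2) × Bool ⊕ Fin (n % 2) → Fin n
  | .inl (j, false) => ⟨j, by omega⟩
  | .inl (j, true) => ⟨n - 1 - j, by omega⟩
  | .inr k => ⟨n / 2 + k, by omega⟩

theorem pairIndex_injective : Function.Injective (pairIndex n) := by
  rintro (⟨j, _ | _⟩ | k) (⟨j', _ | _⟩ | k') h <;>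
    simp only [pairIndex, Fin.ext_iff, Sum.inl.injEq, Sum.inr.injEq,
      Prod.mk.injEq, reduceCtorEq, and_true, and_false] at h ⊢ <;> omega

theorem pairIndex_bijective : Function.Bijective (pairIndex n) :=
  (Fintype.bijective_iff_injective_and_card _).mpr
    ⟨pairIndex_injective, by
      simp only [Fintype.card_sum, Fintype.card_prod, Fintype.card_fin, Fintype.card_bool]
      omega⟩

noncomputable def pairEquiv (n : ℕ) : Fin (n / 2) × Bool ⊕ Fin (n % 2) ≃ Fin n :=
  Equiv.ofBijective _ pairIndex_bijective

theorem apply_eq_sub_pairEquiv (e : Fin n → ℤ) (j : Fin (n / 2)) :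
    phiMap n e j = e (pairEquiv n (.inl (j, false))) - e (pairEquiv n (.inl (j, true))) :=
  rfl

noncomputable def liftSignedPerm (τ : Equiv.Perm (Fin (n / 2))) (ε : Fin (n / 2) → Bool) :
    Equiv.Perm (Fin n) :=
  (pairEquiv n).permCongr <|
    (Equiv.prodShear τ fun j => if ε j then Equiv.boolNot else Equiv.refl Bool).sumCongr
      (Equiv.refl _)

theorem semiconj_liftSignedPerm (τ : Equiv.Perm (Fin (n / 2))) (ε : Fin (n / 2) → Bool) :
    Function.Semiconj (phiMap n) (· ∘ liftSignedPerm τ ε)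
      (fun v j => if ε j then -v (τ j) else v (τ j)) := by
  intro e
  funext j
  simp only [apply_eq_sub_pairEquiv, Function.comp_apply, liftSignedPerm, Equiv.permCongr_apply,
    Equiv.symm_apply_apply, Equiv.sumCongr_apply, Sum.map_inl, Equiv.prodShear_apply]
  cases ε j <;> simp

end phiMap

theorem stmt12_general (n : ℕ) (f : (Fin n → ℤ) →₀ ℂ)
    (hf : ∀ σ : Equiv.Perm (Fin n),
      Finsupp.mapDomain (fun e : Fin n → ℤ => e ∘ σ) f = f) :
    ∀ (τ : Equiv.Perm (Fin (n / 2))) (ε : Fin (n / 2) → Bool),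
      Finsupp.mapDomain
        (fun v : Fin (n / 2) → ℤ => fun j => if ε j then -(v (τ j)) else v (τ j))
        (Finsupp.mapDomain (⇑(phiMap n)) f)
      = Finsupp.mapDomain (⇑(phiMap n)) f := fun τ ε =>
  Finsupp.mapDomain_mapDomain_eq_of_semiconj (phiMap.semiconj_liftSignedPerm τ ε)
    (hf (phiMap.liftSignedPerm τ ε))

/-- Let `n ≥ 1` and `m := ⌊n/2⌋`.  Let `φ : ℤⁿ → ℤ^m` be the
homomorphism `φ(e)ⱼ = eⱼ − e_{n+1−j}` (`1 ≤ j ≤ m`) and let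
`Ψ : ℂ[ℤⁿ] → ℂ[ℤ^m]` be the induced ℂ-algebra homomorphism of group algebras,
sending the basis element of `e ∈ ℤⁿ` to the basis element of `φ(e)` (i.e.
`Ψ = Finsupp.mapDomain φ` on the group algebra `ℂ[ℤⁿ] = (Fin n → ℤ) →₀ ℂ`).
Then for every `f ∈ ℂ[ℤⁿ]` invariant under the symmetric group `Sₙ` permuting
the coordinates of `ℤⁿ`, the image `Ψ(f)` is invariant under the
hyperoctahedral group `S_m ⋉ (ℤ/2ℤ)^m`, where `S_m` permutes the coordinates of
`ℤ^m` and each generator of `(ℤ/2ℤ)^m` negates one coordinate. -/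
theorem stmt12 (n : ℕ) (hn : 1 ≤ n) (f : (Fin n → ℤ) →₀ ℂ)
    (hf : ∀ σ : Equiv.Perm (Fin n),
      Finsupp.mapDomain (fun e : Fin n → ℤ => e ∘ σ) f = f) :
    ∀ (τ : Equiv.Perm (Fin (n / 2))) (ε : Fin (n / 2) → Bool),
      Finsupp.mapDomain
        (fun v : Fin (n / 2) → ℤ => fun j => if ε j then -(v (τ j)) else v (τ j))
        (Finsupp.mapDomain (⇑(phiMap n)) f)
      = Finsupp.mapDomain (⇑(phiMap n)) f :=
  stmt12_general n f hf
end
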